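/- Let each state s ∈ S be represented by a vector in ℝ^d with ‖s‖ ≤ 1, let r : S → ℝ satisfy |r(s)| ≤ r_max, and suppose θ* ∈ (ℝ^d)^m satisfies the Bellman equation V(s,θ*) = r(s) + γ Σ_{s''} P(s,s'') V(s'',θ*) for every s, where V is the one-hidden-layer network. Let J(θ*) be the Jacobian of θ ↦ (V(s,θ))_{s∈S} at θ* and σ* = σ_min^{2,D}(J(θ*)) = inf_{x≠0} ‖J(θ*)x‖_D/‖x‖. For θ ∈ (ℝ^d)^m, step-size α > 0, and states s, s', define the TD update θ⁺(s,s') = θ + α ∇_θ V(s,θ) (r(s) + γ V(s',θ) − V(s,θ)). Then the expected squared distance to θ* after one step, Σ_s μ(s) Σ_{s'} P(s,s') ‖θ⁺(s,s') − θ*‖², is at most (1 − 2α(1−γ)σ*² + 3α²(1+γ²)l⁴) ‖θ − θ*‖² + 4α(1+γ) c0 l m^{−1/2} ‖θ − θ*‖³ + 12 α² γ² l² r_max² / (1−γ)². -/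

import Mathlib

/-!
Expanding the square, the expected squared distance after one TD step is
`‖θ - θ*‖² + 2α E[δ ⟪θ - θ*, ∇V(s,θ)⟫] + α² E[δ² ‖∇V(s,θ)‖²]`, where `δ` is the TD error.
By the Bellman equation the conditional mean of `δ` given `s` is `γ (PΔ)(s) - Δ(s)` with
`Δ = V(·,θ) - V(·,θ*)`, and since `μ` is stationary, `P` does not increase `‖·‖_D`; hence if
`⟪θ - θ*, ∇V(s,θ)⟫` were exactly `Δ(s)` the drift would be at most `-(1-γ)‖Δ‖_D²`.
The gradient of the width-`m` network is `c0/√m`-Lipschitz, so this linearisation is off by at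
most `c0/(2√m) ‖θ - θ*‖²`, which produces the cubic term; linearising at `θ*` instead gives
`‖Δ‖_D ≥ σ* ‖θ - θ*‖ - c0/(2√m) ‖θ - θ*‖²`. The second moment is controlled by `‖∇V‖ ≤ l`,
the `l`-Lipschitz dependence of `V` on `θ`, and `|V(·,θ*)| ≤ r_max/(1-γ)`.
-/

open RealInnerProductSpace

theorem norm_sub_sub_fderiv_le_of_lipschitz_fderiv {E F : Type*} [NormedAddCommGroup E]
    [NormedSpace ℝ E] [NormedAddCommGroup F] [NormedSpace ℝ F] {f : E → F} {f' : E → E →L[ℝ] F}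
    {K : ℝ} (hf : ∀ x, HasFDerivAt f (f' x) x) (hf' : ∀ x y, ‖f' x - f' y‖ ≤ K * ‖x - y‖)
    (x y : E) : ‖f y - f x - f' x (y - x)‖ ≤ K / 2 * ‖y - x‖ ^ 2 := by
  set v := y - x
  have hderiv : ∀ t : ℝ, HasDerivAt (fun t : ℝ => f (x + t • v) - f x - t • f' x v)
      (f' (x + t • v) v - f' x v) t := by
    intro t
    have hline : HasDerivAt (fun t : ℝ => x + t • v) v t := by
      simpa using ((hasDerivAt_id t).smul_const v).const_add x
    exact (((hf _).comp_hasDerivAt t hline).sub_const (f x)).sub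
      (by simpa using (hasDerivAt_id t).smul_const (f' x v))
  have hbound : ∀ t : ℝ, HasDerivAt (fun t => K / 2 * ‖v‖ ^ 2 * t ^ 2) (K * ‖v‖ ^ 2 * t) t := by
    intro t
    refine ((hasDerivAt_pow 2 t).const_mul (K / 2 * ‖v‖ ^ 2)).congr_deriv ?_
    push_cast
    ring
  have hderiv_le : ∀ t ∈ Set.Ico (0 : ℝ) 1, ‖f' (x + t • v) v - f' x v‖ ≤ K * ‖v‖ ^ 2 * t :=
    fun t ht =>
      calc ‖f' (x + t • v) v - f' x v‖ = ‖(f' (x + t • v) - f' x) v‖ := rfl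
        _ ≤ ‖f' (x + t • v) - f' x‖ * ‖v‖ := ContinuousLinearMap.le_opNorm _ _
        _ ≤ K * ‖t • v‖ * ‖v‖ := by
          gcongr
          simpa using hf' (x + t • v) x
        _ = K * ‖v‖ ^ 2 * t := by
          rw [norm_smul, Real.norm_of_nonneg ht.1]
          ring
  simpa [v] using image_norm_le_of_norm_deriv_right_le_deriv_boundary (a := 0) (b := 1)
    (fun t _ => (hderiv t).continuousAt.continuousWithinAt)
    (fun t _ => (hderiv t).hasDerivWithinAt) (by simp [v]) hbound hderiv_le
    (Set.right_mem_Icc.mpr zero_le_one)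

lemma abs_deriv_le_of_lipschitz {f : ℝ → ℝ} {l : ℝ} (hf : ∀ u v, |f u - f v| ≤ l * |u - v|)
    (u : ℝ) : |deriv f u| ≤ l :=
  norm_deriv_le_of_lip' (f := f) (by simpa using (abs_nonneg _).trans (hf 1 0))
    (Filter.Eventually.of_forall fun v => hf v u)

namespace TwoLayerNet

variable {m d : ℕ}

def preact (θ : EuclideanSpace ℝ (Fin m × Fin d)) (x : EuclideanSpace ℝ (Fin d)) (r : Fin m) :
    ℝ :=
  ∑ j, θ (r, j) * x j

def outer (w : Fin m → ℝ) (x : EuclideanSpace ℝ (Fin d)) : EuclideanSpace ℝ (Fin m × Fin d) :=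
  WithLp.toLp 2 fun p => w p.1 * x p.2

noncomputable def net (σ : ℝ → ℝ) (b : Fin m → ℝ) (x : EuclideanSpace ℝ (Fin d))
    (θ : EuclideanSpace ℝ (Fin m × Fin d)) : ℝ :=
  (1 / √m) * ∑ r, b r * σ (preact θ x r)

noncomputable def netGrad (σ : ℝ → ℝ) (b : Fin m → ℝ) (x : EuclideanSpace ℝ (Fin d))
    (θ : EuclideanSpace ℝ (Fin m × Fin d)) : EuclideanSpace ℝ (Fin m × Fin d) :=
  outer (fun r => b r * deriv σ (preact θ x r) / √m) x

lemma preact_sub (θ θ' : EuclideanSpace ℝ (Fin m × Fin d)) (x : EuclideanSpace ℝ (Fin d))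
    (r : Fin m) : preact (θ - θ') x r = preact θ x r - preact θ' x r := by
  simp [preact, sub_mul]

lemma sum_preact_sq_le {x : EuclideanSpace ℝ (Fin d)} (hx : ‖x‖ ≤ 1)
    (θ : EuclideanSpace ℝ (Fin m × Fin d)) : ∑ r, preact θ x r ^ 2 ≤ ‖θ‖ ^ 2 := by
  have hx2 : ∑ j, x j ^ 2 ≤ 1 := by
    rw [← EuclideanSpace.real_norm_sq_eq]
    exact pow_le_one₀ (norm_nonneg x) hx
  rw [EuclideanSpace.real_norm_sq_eq, Fintype.sum_prod_type]
  refine Finset.sum_le_sum fun r _ => ?_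
  calc preact θ x r ^ 2 ≤ (∑ j, θ (r, j) ^ 2) * ∑ j, x j ^ 2 :=
        Finset.sum_mul_sq_le_sq_mul_sq _ _ _
    _ ≤ ∑ j, θ (r, j) ^ 2 :=
        mul_le_of_le_one_right (Finset.sum_nonneg fun j _ => sq_nonneg _) hx2

lemma outer_sub (w w' : Fin m → ℝ) (x : EuclideanSpace ℝ (Fin d)) :
    outer w x - outer w' x = outer (w - w') x := by
  ext p
  simp [outer, sub_mul]

lemma inner_outer (w : Fin m → ℝ) (x : EuclideanSpace ℝ (Fin d))
    (θ : EuclideanSpace ℝ (Fin m × Fin d)) : ⟪outer w x, θ⟫ = ∑ r, w r * preact θ x r := by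
  simp only [outer, preact, PiLp.inner_apply, RCLike.inner_apply, conj_trivial,
    Fintype.sum_prod_type, Finset.mul_sum]
  exact Finset.sum_congr rfl fun r _ => Finset.sum_congr rfl fun j _ => by ring

lemma norm_outer_sq (w : Fin m → ℝ) (x : EuclideanSpace ℝ (Fin d)) :
    ‖outer w x‖ ^ 2 = (∑ r, w r ^ 2) * ‖x‖ ^ 2 := by
  simp only [EuclideanSpace.real_norm_sq_eq, outer, Fintype.sum_prod_type, mul_pow,
    Finset.sum_mul_sum]

lemma norm_outer_sq_le (w : Fin m → ℝ) {x : EuclideanSpace ℝ (Fin d)} (hx : ‖x‖ ≤ 1) :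
    ‖outer w x‖ ^ 2 ≤ ∑ r, w r ^ 2 := by
  rw [norm_outer_sq]
  exact mul_le_of_le_one_right (Finset.sum_nonneg fun r _ => sq_nonneg _)
    (pow_le_one₀ (norm_nonneg x) hx)

lemma hasFDerivAt_preact (x : EuclideanSpace ℝ (Fin d)) (r : Fin m)
    (θ : EuclideanSpace ℝ (Fin m × Fin d)) :
    HasFDerivAt (preact · x r) (∑ j, x j • EuclideanSpace.proj (𝕜 := ℝ) (r, j)) θ := by
  convert (∑ j, x j • EuclideanSpace.proj (𝕜 := ℝ) (r, j)).hasFDerivAt with θ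
  simp [preact, mul_comm]

lemma hasFDerivAt_net {σ : ℝ → ℝ} (hσ : Differentiable ℝ σ) (b : Fin m → ℝ)
    (x : EuclideanSpace ℝ (Fin d)) (θ : EuclideanSpace ℝ (Fin m × Fin d)) :
    HasFDerivAt (net σ b x) (innerSL ℝ (netGrad σ b x θ)) θ := by
  have hrow : ∀ r, HasFDerivAt (fun θ => b r * σ (preact θ x r))
      (b r • deriv σ (preact θ x r) • ∑ j, x j • EuclideanSpace.proj (𝕜 := ℝ) (r, j)) θ :=
    fun r => ((hσ _).hasDerivAt.comp_hasFDerivAt θ (hasFDerivAt_preact x r θ)).const_mul (b r)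
  refine ((HasFDerivAt.fun_sum fun r _ => hrow r).const_mul (1 / √m)).congr_fderiv ?_
  ext y
  rw [innerSL_apply_apply, netGrad, inner_outer]
  simp [preact, Finset.mul_sum, div_eq_inv_mul, mul_comm, mul_left_comm]

variable {σ : ℝ → ℝ} {b : Fin m → ℝ} {x : EuclideanSpace ℝ (Fin d)}

lemma norm_netGrad_le {l : ℝ} (hdσ : ∀ u, |deriv σ u| ≤ l) (hb : ∀ r, |b r| ≤ 1)
    (hx : ‖x‖ ≤ 1) (θ : EuclideanSpace ℝ (Fin m × Fin d)) : ‖netGrad σ b x θ‖ ≤ l := by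
  have hl : 0 ≤ l := (abs_nonneg _).trans (hdσ 0)
  have hterm : ∀ r, (b r * deriv σ (preact θ x r) / √m) ^ 2 ≤ l ^ 2 / m := fun r => by
    rw [div_pow, Real.sq_sqrt m.cast_nonneg, mul_pow]
    gcongr
    calc b r ^ 2 * deriv σ (preact θ x r) ^ 2 ≤ 1 * l ^ 2 :=
          mul_le_mul ((sq_le_one_iff_abs_le_one _).mpr (hb r))
            (sq_le_sq' (abs_le.mp (hdσ _)).1 (abs_le.mp (hdσ _)).2) (sq_nonneg _) zero_le_one
      _ = l ^ 2 := one_mul _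
  refine (pow_le_pow_iff_left₀ (norm_nonneg _) hl two_ne_zero).mp ?_
  calc ‖netGrad σ b x θ‖ ^ 2 ≤ ∑ r : Fin m, l ^ 2 / m :=
        (norm_outer_sq_le _ hx).trans (Finset.sum_le_sum fun r _ => hterm r)
    _ ≤ l ^ 2 := by
        rw [Finset.sum_const, Finset.card_univ, Fintype.card_fin, nsmul_eq_mul, ← mul_div_assoc]
        exact div_le_of_le_mul₀ m.cast_nonneg (sq_nonneg l) (mul_comm _ _).le

lemma norm_netGrad_sub_le {c0 : ℝ} (hdσ : ∀ u v, |deriv σ u - deriv σ v| ≤ c0 * |u - v|)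
    (hb : ∀ r, |b r| ≤ 1) (hx : ‖x‖ ≤ 1) (θ θ' : EuclideanSpace ℝ (Fin m × Fin d)) :
    ‖netGrad σ b x θ - netGrad σ b x θ'‖ ≤ c0 / √m * ‖θ - θ'‖ := by
  have hc0 : 0 ≤ c0 := by simpa using (abs_nonneg _).trans (hdσ 1 0)
  have hterm : ∀ r, (b r * deriv σ (preact θ x r) / √m - b r * deriv σ (preact θ' x r) / √m) ^ 2
      ≤ (c0 / √m) ^ 2 * preact (θ - θ') x r ^ 2 := fun r => by
    rw [← sub_div, ← mul_sub, div_pow, div_pow, mul_pow, preact_sub, div_mul_eq_mul_div,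
      ← mul_pow]
    gcongr
    rw [mul_pow]
    calc b r ^ 2 * (deriv σ (preact θ x r) - deriv σ (preact θ' x r)) ^ 2
        ≤ 1 * (c0 * |preact θ x r - preact θ' x r|) ^ 2 :=
          mul_le_mul ((sq_le_one_iff_abs_le_one _).mpr (hb r))
            (sq_le_sq' (abs_le.mp (hdσ _ _)).1 (abs_le.mp (hdσ _ _)).2) (sq_nonneg _) zero_le_one
      _ = c0 ^ 2 * (preact θ x r - preact θ' x r) ^ 2 := by rw [one_mul, mul_pow, sq_abs]
  refine (pow_le_pow_iff_left₀ (norm_nonneg _) (by positivity) two_ne_zero).mp ?_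
  calc ‖netGrad σ b x θ - netGrad σ b x θ'‖ ^ 2
      ≤ ∑ r, (c0 / √m) ^ 2 * preact (θ - θ') x r ^ 2 := by
        rw [netGrad, netGrad, outer_sub]
        exact (norm_outer_sq_le _ hx).trans (Finset.sum_le_sum fun r _ => hterm r)
    _ ≤ (c0 / √m * ‖θ - θ'‖) ^ 2 := by
        rw [← Finset.mul_sum, mul_pow]
        gcongr
        exact sum_preact_sq_le hx _

lemma abs_net_sub_le {l : ℝ} (hσ : Differentiable ℝ σ) (hdσ : ∀ u, |deriv σ u| ≤ l)
    (hb : ∀ r, |b r| ≤ 1) (hx : ‖x‖ ≤ 1) (θ θ' : EuclideanSpace ℝ (Fin m × Fin d)) :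
    |net σ b x θ - net σ b x θ'| ≤ l * ‖θ - θ'‖ :=
  Convex.norm_image_sub_le_of_norm_hasFDerivWithin_le
    (fun θ _ => (hasFDerivAt_net hσ b x θ).hasFDerivWithinAt)
    (fun θ _ => (innerSL_apply_norm ℝ _).trans_le (norm_netGrad_le hdσ hb hx θ))
    convex_univ (Set.mem_univ θ') (Set.mem_univ θ)

lemma abs_net_sub_sub_inner_le {c0 : ℝ} (hσ : Differentiable ℝ σ)
    (hdσ : ∀ u v, |deriv σ u - deriv σ v| ≤ c0 * |u - v|) (hb : ∀ r, |b r| ≤ 1) (hx : ‖x‖ ≤ 1)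
    (θ θ' : EuclideanSpace ℝ (Fin m × Fin d)) :
    |net σ b x θ - net σ b x θ' - ⟪netGrad σ b x θ', θ - θ'⟫| ≤ c0 / √m / 2 * ‖θ - θ'‖ ^ 2 :=
  norm_sub_sub_fderiv_le_of_lipschitz_fderiv (hasFDerivAt_net hσ b x)
    (fun θ θ' => by
      rw [← map_sub, innerSL_apply_norm]
      exact norm_netGrad_sub_le hdσ hb hx θ θ') θ' θ

end TwoLayerNet

section WeightedSums

variable {ι : Type*} [Fintype ι] {w f : ι → ℝ}

lemma sum_mul_const_of_sum_eq_one (hsum : ∑ i, w i = 1) (c : ℝ) : ∑ i, w i * c = c := by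
  rw [← Finset.sum_mul, hsum, one_mul]

lemma sum_mul_le_of_le {B : ℝ} (hw : ∀ i, 0 ≤ w i) (hsum : ∑ i, w i = 1) (hf : ∀ i, f i ≤ B) :
    ∑ i, w i * f i ≤ B :=
  calc ∑ i, w i * f i ≤ ∑ i, w i * B :=
        Finset.sum_le_sum fun i _ => mul_le_mul_of_nonneg_left (hf i) (hw i)
    _ = B := sum_mul_const_of_sum_eq_one hsum B

lemma abs_sum_mul_le_of_abs_le {B : ℝ} (hw : ∀ i, 0 ≤ w i) (hsum : ∑ i, w i = 1)
    (hf : ∀ i, |f i| ≤ B) : |∑ i, w i * f i| ≤ B :=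
  calc |∑ i, w i * f i| ≤ ∑ i, w i * |f i| := by
        simpa only [abs_mul, abs_of_nonneg (hw _)] using
          Finset.abs_sum_le_sum_abs (fun i => w i * f i) Finset.univ
    _ ≤ B := sum_mul_le_of_le hw hsum hf

lemma sum_mul_sq_le_of_abs_le {B : ℝ} (hw : ∀ i, 0 ≤ w i) (hsum : ∑ i, w i = 1)
    (hf : ∀ i, |f i| ≤ B) : ∑ i, w i * f i ^ 2 ≤ B ^ 2 :=
  sum_mul_le_of_le hw hsum fun i => sq_le_sq' (abs_le.mp (hf i)).1 (abs_le.mp (hf i)).2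

/-- The norm `‖f‖_D` of the statement, for the weights `w = μ`. -/
noncomputable def weightedNorm (w f : ι → ℝ) : ℝ :=
  √(∑ i, w i * f i ^ 2)

lemma weightedNorm_le_add (hw : ∀ i, 0 ≤ w i) (f g : ι → ℝ) :
    weightedNorm w f ≤ weightedNorm w g + weightedNorm w (f - g) := by
  have hrepr : ∀ h : ι → ℝ, weightedNorm w h = ‖WithLp.toLp 2 fun i => √(w i) * h i‖ := by
    intro h
    simp [weightedNorm, EuclideanSpace.norm_eq, mul_pow, Real.sq_sqrt (hw _)]
  have hsub : (fun i => √(w i) * (f - g) i) = (fun i => √(w i) * f i) - fun i => √(w i) * g i := by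
    funext i
    simp [mul_sub]
  rw [hrepr, hrepr, hrepr, hsub, WithLp.toLp_sub]
  exact norm_le_insert' _ _

lemma weightedNorm_le_of_abs_le (hw : ∀ i, 0 ≤ w i) (hsum : ∑ i, w i = 1) {c : ℝ}
    (hf : ∀ i, |f i| ≤ c) : weightedNorm w f ≤ c := by
  obtain ⟨i, -, -⟩ := Finset.exists_ne_zero_of_sum_ne_zero (hsum.trans_ne one_ne_zero)
  rw [weightedNorm, ← Real.sqrt_sq ((abs_nonneg _).trans (hf i))]
  exact Real.sqrt_le_sqrt (sum_mul_sq_le_of_abs_le hw hsum hf)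

end WeightedSums

section MarkovChain

variable {S : Type*} [Fintype S] {P : S → S → ℝ} {μ : S → ℝ}

lemma sum_mul_sum_mul_eq_of_stationary (hstat : ∀ s', ∑ s, μ s * P s s' = μ s') (f : S → ℝ) :
    ∑ s, μ s * ∑ s', P s s' * f s' = ∑ s, μ s * f s := by
  simp_rw [Finset.mul_sum, ← mul_assoc]
  rw [Finset.sum_comm]
  simp_rw [← Finset.sum_mul, hstat]

lemma sum_mul_mul_sum_le_of_stationary (hP : ∀ s s', 0 ≤ P s s')
    (hProw : ∀ s, ∑ s', P s s' = 1) (hμ : ∀ s, 0 ≤ μ s) (hstat : ∀ s', ∑ s, μ s * P s s' = μ s')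
    (f : S → ℝ) : ∑ s, μ s * (f s * ∑ s', P s s' * f s') ≤ ∑ s, μ s * f s ^ 2 := by
  have hpoint : ∀ s, 2 * (f s * ∑ s', P s s' * f s') ≤ f s ^ 2 + ∑ s', P s s' * f s' ^ 2 := by
    intro s
    calc 2 * (f s * ∑ s', P s s' * f s') = ∑ s', P s s' * (2 * f s * f s') := by
          rw [Finset.mul_sum, Finset.mul_sum]
          exact Finset.sum_congr rfl fun s' _ => by ring
      _ ≤ ∑ s', P s s' * (f s ^ 2 + f s' ^ 2) :=
          Finset.sum_le_sum fun s' _ => mul_le_mul_of_nonneg_left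
            (by nlinarith [sq_nonneg (f s - f s')]) (hP s s')
      _ = f s ^ 2 + ∑ s', P s s' * f s' ^ 2 := by
          simp only [mul_add, Finset.sum_add_distrib, sum_mul_const_of_sum_eq_one (hProw s)]
  have hsum : 2 * ∑ s, μ s * (f s * ∑ s', P s s' * f s')
      ≤ ∑ s, μ s * f s ^ 2 + ∑ s, μ s * ∑ s', P s s' * f s' ^ 2 := by
    rw [Finset.mul_sum, ← Finset.sum_add_distrib]
    refine Finset.sum_le_sum fun s _ => ?_
    rw [← mul_add, mul_left_comm]
    exact mul_le_mul_of_nonneg_left (hpoint s) (hμ s)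
  rw [sum_mul_sum_mul_eq_of_stationary hstat] at hsum
  linarith

variable {rew : S → ℝ} {γ R : ℝ}

lemma abs_le_div_of_bellman {v : S → ℝ} (hP : ∀ s s', 0 ≤ P s s')
    (hProw : ∀ s, ∑ s', P s s' = 1) (hγ0 : 0 ≤ γ) (hγ1 : γ < 1) (hrew : ∀ s, |rew s| ≤ R)
    (hv : ∀ s, v s = rew s + γ * ∑ s', P s s' * v s') (s : S) : |v s| ≤ R / (1 - γ) := by
  have : Nonempty S := ⟨s⟩
  obtain ⟨s₀, hs₀⟩ := Finite.exists_max fun s => |v s|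
  have hstep : |v s₀| ≤ R + γ * |v s₀| :=
    calc |v s₀| ≤ |rew s₀| + |γ * ∑ s', P s₀ s' * v s'| := by rw [hv]; exact abs_add_le _ _
      _ = |rew s₀| + γ * |∑ s', P s₀ s' * v s'| := by rw [abs_mul, abs_of_nonneg hγ0]
      _ ≤ R + γ * |v s₀| := add_le_add (hrew s₀)
          (mul_le_mul_of_nonneg_left (abs_sum_mul_le_of_abs_le (hP s₀) (hProw s₀) hs₀) hγ0)
  rw [le_div_iff₀ (sub_pos.mpr hγ1)]
  nlinarith [hs₀ s]

lemma abs_bellman_residual_le {v : S → ℝ} (hP : ∀ s s', 0 ≤ P s s')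
    (hProw : ∀ s, ∑ s', P s s' = 1) (hγ0 : 0 ≤ γ) (hγ1 : γ < 1) (hrew : ∀ s, |rew s| ≤ R)
    (hv : ∀ s, v s = rew s + γ * ∑ s', P s s' * v s') (s s' : S) :
    |rew s + γ * v s' - v s| ≤ 2 * γ * R / (1 - γ) := by
  have hbound := abs_le_div_of_bellman hP hProw hγ0 hγ1 hrew hv
  calc |rew s + γ * v s' - v s| = |γ * (v s' - ∑ s'', P s s'' * v s'')| := by
        rw [hv s]
        congr 1
        ring
    _ ≤ γ * (R / (1 - γ) + R / (1 - γ)) := by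
        rw [abs_mul, abs_of_nonneg hγ0]
        gcongr
        exact (abs_sub _ _).trans
          (add_le_add (hbound s') (abs_sum_mul_le_of_abs_le (hP s) (hProw s) hbound))
    _ = 2 * γ * R / (1 - γ) := by ring

lemma sum_mul_td_error_eq {v v' : S → ℝ} (hProw : ∀ s, ∑ s', P s s' = 1)
    (hv' : ∀ s, v' s = rew s + γ * ∑ s', P s s' * v' s') (s : S) :
    ∑ s', P s s' * (rew s + γ * v s' - v s)
      = γ * ∑ s', P s s' * (v s' - v' s') - (v s - v' s) := by
  simp only [mul_add, mul_sub, Finset.sum_add_distrib, Finset.sum_sub_distrib,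
    sum_mul_const_of_sum_eq_one (hProw s), ← Finset.mul_sum, mul_left_comm _ γ]
  rw [hv' s]
  ring

lemma sum_mul_mul_td_le {a f : S → ℝ} {ε B : ℝ} (hP : ∀ s s', 0 ≤ P s s')
    (hProw : ∀ s, ∑ s', P s s' = 1) (hμ : ∀ s, 0 ≤ μ s) (hμsum : ∑ s, μ s = 1)
    (hstat : ∀ s', ∑ s, μ s * P s s' = μ s') (hγ : 0 ≤ γ) (ha : ∀ s, |a s - f s| ≤ ε)
    (hf : ∀ s, |f s| ≤ B) :
    ∑ s, μ s * (a s * (γ * ∑ s', P s s' * f s' - f s))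
      ≤ -((1 - γ) * ∑ s, μ s * f s ^ 2) + (1 + γ) * ε * B := by
  have hsplit : ∑ s, μ s * (a s * (γ * ∑ s', P s s' * f s' - f s))
      = γ * ∑ s, μ s * (f s * ∑ s', P s s' * f s') - ∑ s, μ s * f s ^ 2
        + ∑ s, μ s * ((a s - f s) * (γ * ∑ s', P s s' * f s' - f s)) := by
    rw [Finset.mul_sum, ← Finset.sum_sub_distrib, ← Finset.sum_add_distrib]
    exact Finset.sum_congr rfl fun s _ => by ring
  have hmix := mul_le_mul_of_nonneg_left
    (sum_mul_mul_sum_le_of_stationary hP hProw hμ hstat f) hγ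
  have hdrift : ∀ s, |γ * ∑ s', P s s' * f s' - f s| ≤ (1 + γ) * B := fun s =>
    calc |γ * ∑ s', P s s' * f s' - f s| ≤ |γ * ∑ s', P s s' * f s'| + |f s| := abs_sub _ _
      _ = γ * |∑ s', P s s' * f s'| + |f s| := by rw [abs_mul, abs_of_nonneg hγ]
      _ ≤ γ * B + B := add_le_add
          (mul_le_mul_of_nonneg_left (abs_sum_mul_le_of_abs_le (hP s) (hProw s) hf) hγ) (hf s)
      _ = (1 + γ) * B := by ring
  have herr : ∑ s, μ s * ((a s - f s) * (γ * ∑ s', P s s' * f s' - f s))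
      ≤ (1 + γ) * ε * B := by
    refine sum_mul_le_of_le hμ hμsum fun s => (le_abs_self _).trans ?_
    rw [abs_mul, mul_comm (1 + γ), mul_assoc]
    exact mul_le_mul (ha s) (hdrift s) (abs_nonneg _) ((abs_nonneg _).trans (ha s))
  linarith

lemma sum_mul_sum_mul_sq_mul_le {δ : S → S → ℝ} {f w : S → ℝ} {c K : ℝ}
    (hP : ∀ s s', 0 ≤ P s s') (hProw : ∀ s, ∑ s', P s s' = 1) (hμ : ∀ s, 0 ≤ μ s)
    (hμsum : ∑ s, μ s = 1) (hstat : ∀ s', ∑ s, μ s * P s s' = μ s')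
    (hδ : ∀ s s', |δ s s' - (γ * f s' - f s)| ≤ c) (hw0 : ∀ s, 0 ≤ w s) (hw : ∀ s, w s ≤ K) :
    ∑ s, μ s * ∑ s', P s s' * (δ s s' ^ 2 * w s)
      ≤ K * (3 * c ^ 2 + 3 * (1 + γ ^ 2) * ∑ s, μ s * f s ^ 2) := by
  have hpoint : ∀ s s', δ s s' ^ 2 * w s
      ≤ K * 3 * c ^ 2 + K * 3 * γ ^ 2 * f s' ^ 2 + K * 3 * f s ^ 2 := fun s s' => by
    have hc := sq_le_sq' (abs_le.mp (hδ s s')).1 (abs_le.mp (hδ s s')).2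
    have hsq : δ s s' ^ 2 ≤ 3 * c ^ 2 + 3 * γ ^ 2 * f s' ^ 2 + 3 * f s ^ 2 := by
      nlinarith [sq_nonneg (δ s s' - (γ * f s' - f s) - γ * f s'),
        sq_nonneg (δ s s' - (γ * f s' - f s) + f s), sq_nonneg (γ * f s' + f s)]
    calc δ s s' ^ 2 * w s ≤ δ s s' ^ 2 * K := mul_le_mul_of_nonneg_left (hw s) (sq_nonneg _)
      _ ≤ (3 * c ^ 2 + 3 * γ ^ 2 * f s' ^ 2 + 3 * f s ^ 2) * K :=
          mul_le_mul_of_nonneg_right hsq ((hw0 s).trans (hw s))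
      _ = _ := by ring
  calc ∑ s, μ s * ∑ s', P s s' * (δ s s' ^ 2 * w s)
      ≤ ∑ s, μ s * ∑ s', P s s' *
          (K * 3 * c ^ 2 + K * 3 * γ ^ 2 * f s' ^ 2 + K * 3 * f s ^ 2) :=
        Finset.sum_le_sum fun s _ => mul_le_mul_of_nonneg_left (Finset.sum_le_sum fun s' _ =>
          mul_le_mul_of_nonneg_left (hpoint s s') (hP s s')) (hμ s)
    _ = K * (3 * c ^ 2 + 3 * (1 + γ ^ 2) * ∑ s, μ s * f s ^ 2) := by
        simp only [mul_add, Finset.sum_add_distrib, sum_mul_const_of_sum_eq_one (hProw _),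
          ← Finset.mul_sum, mul_left_comm _ (K * 3 * γ ^ 2)]
        rw [sum_mul_sum_mul_eq_of_stationary hstat, sum_mul_const_of_sum_eq_one hμsum]
        simp only [mul_left_comm (μ _) (K * 3), ← Finset.mul_sum]
        ring

lemma sum_mul_sum_mul_norm_add_smul_sq {E : Type*} [NormedAddCommGroup E]
    [InnerProductSpace ℝ E] (hProw : ∀ s, ∑ s', P s s' = 1) (hμsum : ∑ s, μ s = 1) (u : E)
    (v : S → E) (α : ℝ) (δ : S → S → ℝ) :
    ∑ s, μ s * ∑ s', P s s' * ‖u + (α * δ s s') • v s‖ ^ 2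
      = ‖u‖ ^ 2 + 2 * α * ∑ s, μ s * (⟪u, v s⟫ * ∑ s', P s s' * δ s s')
        + α ^ 2 * ∑ s, μ s * ∑ s', P s s' * (δ s s' ^ 2 * ‖v s‖ ^ 2) := by
  have hpoint : ∀ s s', ‖u + (α * δ s s') • v s‖ ^ 2
      = ‖u‖ ^ 2 + 2 * α * ⟪u, v s⟫ * δ s s' + α ^ 2 * (δ s s' ^ 2 * ‖v s‖ ^ 2) := fun s s' => by
    rw [norm_add_sq_real, real_inner_smul_right, norm_smul, Real.norm_eq_abs, mul_pow, sq_abs]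
    ring
  simp only [hpoint, mul_add, Finset.sum_add_distrib, sum_mul_const_of_sum_eq_one (hProw _),
    mul_left_comm _ (2 * α * _), mul_left_comm _ (α ^ 2), ← Finset.mul_sum]
  rw [sum_mul_const_of_sum_eq_one hμsum]
  congr 2
  rw [Finset.mul_sum]
  exact Finset.sum_congr rfl fun s _ => by ring

end MarkovChain

lemma sq_sub_two_mul_le_of_le_sqrt_add {p e D : ℝ} (hp : 0 ≤ p) (he : 0 ≤ e) (hD : 0 ≤ D)
    (h : p ≤ √D + e) : p ^ 2 - 2 * p * e ≤ D := by
  rcases le_total p e with hpe | hep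
  · nlinarith
  · nlinarith [Real.sq_sqrt hD, mul_self_le_mul_self (sub_nonneg.mpr hep) (sub_le_iff_le_add.mpr h)]

lemma iInf_div_norm_mul_norm_le {E : Type*} [NormedAddCommGroup E] {f : E → ℝ}
    (hf : ∀ x, 0 ≤ f x) (x : E) : (⨅ y : {y : E // y ≠ 0}, f y / ‖(y : E)‖) * ‖x‖ ≤ f x := by
  rcases eq_or_ne x 0 with rfl | hx
  · simpa using hf 0
  · have hbdd : BddBelow (Set.range fun y : {y : E // y ≠ 0} => f y / ‖(y : E)‖) :=
      ⟨0, Set.forall_mem_range.mpr fun y => div_nonneg (hf y) (norm_nonneg _)⟩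
    exact (le_div_iff₀ (norm_pos_iff.mpr hx)).mp (ciInf_le hbdd ⟨x, hx⟩)

lemma fderiv_euclidean_apply {H ι : Type*} [NormedAddCommGroup H] [NormedSpace ℝ H] [Fintype ι]
    {f : H → EuclideanSpace ℝ ι} {f' : ι → H →L[ℝ] ℝ} {y : H}
    (hf : ∀ i, HasFDerivAt (fun x => f x i) (f' i) y) (v : H) (i : ι) :
    fderiv ℝ f y v i = f' i v := by
  have hd : DifferentiableAt ℝ f y :=
    differentiableAt_euclidean.mpr fun i => (hf i).differentiableAt
  have hcoord : HasFDerivAt (fun x => f x i) ((EuclideanSpace.proj i).comp (fderiv ℝ f y)) y :=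
    (EuclideanSpace.proj (𝕜 := ℝ) i).hasFDerivAt.comp y hd.hasFDerivAt
  exact congrArg (· v) (hcoord.unique (hf i))

theorem td_expected_sq_dist_le {S Θ : Type*} [Fintype S] [NormedAddCommGroup Θ]
    [InnerProductSpace ℝ Θ] {P : S → S → ℝ} {μ : S → ℝ} (hP : ∀ s s', 0 ≤ P s s')
    (hProw : ∀ s, ∑ s', P s s' = 1) (hμ : ∀ s, 0 ≤ μ s) (hμsum : ∑ s, μ s = 1)
    (hstat : ∀ s', ∑ s, μ s * P s s' = μ s') {γ α R L κ σ : ℝ} (hγ0 : 0 ≤ γ) (hγ1 : γ < 1)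
    (hα : 0 ≤ α) (hσ : 0 ≤ σ) {V : Θ → S → ℝ} {g : Θ → S → Θ} {rew : S → ℝ}
    (hrew : ∀ s, |rew s| ≤ R) (hg : ∀ θ s, ‖g θ s‖ ≤ L)
    (hVlip : ∀ θ θ' s, |V θ s - V θ' s| ≤ L * ‖θ - θ'‖)
    (hVtaylor : ∀ θ θ' s, |V θ s - V θ' s - ⟪g θ' s, θ - θ'⟫| ≤ κ * ‖θ - θ'‖ ^ 2) {θstar : Θ}
    (hbellman : ∀ s, V θstar s = rew s + γ * ∑ s', P s s' * V θstar s')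
    (hσJ : ∀ x, σ * ‖x‖ ≤ weightedNorm μ fun s => ⟪g θstar s, x⟫) (θ : Θ) :
    ∑ s, μ s * ∑ s', P s s' * ‖θ + (α * (rew s + γ * V θ s' - V θ s)) • g θ s - θstar‖ ^ 2
      ≤ (1 - 2 * α * (1 - γ) * σ ^ 2 + 3 * α ^ 2 * (1 + γ ^ 2) * L ^ 4) * ‖θ - θstar‖ ^ 2
        + 8 * α * (1 + γ) * L * κ * ‖θ - θstar‖ ^ 3
        + 12 * α ^ 2 * γ ^ 2 * L ^ 2 * R ^ 2 / (1 - γ) ^ 2 := by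
  obtain ⟨s₀, -, -⟩ := Finset.exists_ne_zero_of_sum_ne_zero (hμsum.trans_ne one_ne_zero)
  set n := ‖θ - θstar‖
  have hL : 0 ≤ L := (norm_nonneg _).trans (hg θ s₀)
  have hκn : 0 ≤ κ * n ^ 2 := (abs_nonneg _).trans (hVtaylor θ θstar s₀)
  have hΔ : ∀ s, |V θ s - V θstar s| ≤ L * n := fun s => hVlip θ θstar s
  have hlin : ∀ s, |⟪θ - θstar, g θ s⟫ - (V θ s - V θstar s)| ≤ κ * n ^ 2 := fun s =>
    calc |⟪θ - θstar, g θ s⟫ - (V θ s - V θstar s)|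
        = |V θstar s - V θ s - ⟪g θ s, θstar - θ⟫| := by
          rw [← neg_sub θ θstar, inner_neg_right, real_inner_comm]
          congr 1
          ring
      _ ≤ κ * ‖θstar - θ‖ ^ 2 := hVtaylor θstar θ s
      _ = κ * n ^ 2 := by rw [norm_sub_rev]
  have hexpand := sum_mul_sum_mul_norm_add_smul_sq hProw hμsum (θ - θstar) (g θ) α
    fun s s' => rew s + γ * V θ s' - V θ s
  simp only [sum_mul_td_error_eq hProw hbellman, ← add_sub_right_comm θ _ θstar] at hexpand
  have hcross := sum_mul_mul_td_le hP hProw hμ hμsum hstat hγ0 hlin hΔ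
  have hquad := sum_mul_sum_mul_sq_mul_le (δ := fun s s' => rew s + γ * V θ s' - V θ s)
    (w := fun s => ‖g θ s‖ ^ 2) (f := fun s => V θ s - V θstar s) hP hProw hμ hμsum hstat
    (fun s s' => by
      convert abs_bellman_residual_le hP hProw hγ0 hγ1 hrew hbellman s s' using 2
      ring)
    (fun s => sq_nonneg _) (fun s => pow_le_pow_left₀ (norm_nonneg _) (hg θ s) 2)
  have hupper : ∑ s, μ s * (V θ s - V θstar s) ^ 2 ≤ (L * n) ^ 2 :=
    sum_mul_sq_le_of_abs_le hμ hμsum hΔ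
  have hσL : σ * n ≤ L * n := (hσJ _).trans (weightedNorm_le_of_abs_le hμ hμsum fun s =>
    (abs_real_inner_le_norm _ _).trans (mul_le_mul_of_nonneg_right (hg θstar s) (norm_nonneg _)))
  have hlower : (σ * n) ^ 2 - 2 * (σ * n) * (κ * n ^ 2)
      ≤ ∑ s, μ s * (V θ s - V θstar s) ^ 2 := by
    refine sq_sub_two_mul_le_of_le_sqrt_add (by positivity) hκn
      (Finset.sum_nonneg fun s _ => mul_nonneg (hμ s) (sq_nonneg _)) ?_
    calc σ * n ≤ weightedNorm μ fun s => ⟪g θstar s, θ - θstar⟫ := hσJ _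
      _ ≤ weightedNorm μ (fun s => V θ s - V θstar s)
          + weightedNorm μ ((fun s => ⟪g θstar s, θ - θstar⟫) - fun s => V θ s - V θstar s) :=
        weightedNorm_le_add hμ _ _
      _ ≤ √(∑ s, μ s * (V θ s - V θstar s) ^ 2) + κ * n ^ 2 := by
        refine add_le_add le_rfl (weightedNorm_le_of_abs_le hμ hμsum fun s => ?_)
        rw [Pi.sub_apply, abs_sub_comm]
        exact hVtaylor θ θstar s
  have h1γ : 0 ≤ 1 - γ := sub_nonneg.mpr hγ1.le
  have h1 := mul_le_mul_of_nonneg_left hcross (by positivity : (0 : ℝ) ≤ 2 * α)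
  have h2 := mul_le_mul_of_nonneg_left hquad (by positivity : (0 : ℝ) ≤ α ^ 2)
  have h3 := mul_le_mul_of_nonneg_left hlower (by positivity : (0 : ℝ) ≤ 2 * α * (1 - γ))
  have h4 := mul_le_mul_of_nonneg_left hupper
    (by positivity : (0 : ℝ) ≤ 3 * α ^ 2 * L ^ 2 * (1 + γ ^ 2))
  have h5 := mul_le_mul_of_nonneg_left hσL
    (by positivity : (0 : ℝ) ≤ 4 * α * (1 - γ) * (κ * n ^ 2))
  have h6 : 0 ≤ α * L * (κ * n ^ 2) * n := by positivity
  have hres : α ^ 2 * L ^ 2 * (3 * (2 * γ * R / (1 - γ)) ^ 2)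
      = 12 * α ^ 2 * γ ^ 2 * L ^ 2 * R ^ 2 / (1 - γ) ^ 2 := by
    rw [div_pow]
    ring
  rw [hexpand]
  linarith [mul_nonneg hγ0 h6]

theorem stmt19_general {S : Type*} [Fintype S] {d m : ℕ}
    (P : S → S → ℝ) (μ : S → ℝ) (γ l c0 α rmax : ℝ)
    (hPnonneg : ∀ s s', 0 ≤ P s s') (hProw : ∀ s, ∑ s', P s s' = 1)
    (hμnonneg : ∀ s, 0 ≤ μ s) (hμsum : ∑ s, μ s = 1)
    (hstat : ∀ s', ∑ s, μ s * P s s' = μ s')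
    (hγ : γ ∈ Set.Ioo (0 : ℝ) 1) (hα : 0 < α)
    (σ : ℝ → ℝ) (hσdiff : Differentiable ℝ σ)
    (hσlip : ∀ u v, |σ u - σ v| ≤ l * |u - v|)
    (hσsmooth : ∀ u v, |deriv σ u - deriv σ v| ≤ c0 * |u - v|)
    (b : Fin m → ℝ) (hb : ∀ r, |b r| ≤ 1)
    (emb : S → EuclideanSpace ℝ (Fin d)) (hemb : ∀ s, ‖emb s‖ ≤ 1)
    (rew : S → ℝ) (hrew : ∀ s, |rew s| ≤ rmax)
    (V : EuclideanSpace ℝ (Fin m × Fin d) → EuclideanSpace ℝ S)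
    (hV : ∀ θ s, V θ s = (1 / Real.sqrt m) * ∑ r, b r * σ (∑ j, θ (r, j) * emb s j))
    (gradV : EuclideanSpace ℝ (Fin m × Fin d) → S → EuclideanSpace ℝ (Fin m × Fin d))
    (hgradV : ∀ θ s (r : Fin m) (j : Fin d),
      gradV θ s (r, j)
        = (1 / Real.sqrt m) * b r * deriv σ (∑ j', θ (r, j') * emb s j') * emb s j)
    (θstar : EuclideanSpace ℝ (Fin m × Fin d))
    (hbellman : ∀ s, V θstar s = rew s + γ * ∑ s'', P s s'' * V θstar s'')
    (θ : EuclideanSpace ℝ (Fin m × Fin d)) :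
    ∑ s, μ s * ∑ s', P s s' *
        ‖θ + (α * (rew s + γ * V θ s' - V θ s)) • gradV θ s - θstar‖ ^ 2
      ≤ (1 - 2 * α * (1 - γ) *
            (⨅ x : {x : EuclideanSpace ℝ (Fin m × Fin d) // x ≠ 0},
              Real.sqrt (∑ s, μ s * (fderiv ℝ V θstar x.1 s) ^ 2) / ‖x.1‖) ^ 2
          + 3 * α ^ 2 * (1 + γ ^ 2) * l ^ 4) * ‖θ - θstar‖ ^ 2
        + 4 * α * (1 + γ) * c0 * l * (Real.sqrt m)⁻¹ * ‖θ - θstar‖ ^ 3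
        + 12 * α ^ 2 * γ ^ 2 * l ^ 2 * rmax ^ 2 / (1 - γ) ^ 2 := by
  obtain ⟨hγ0, hγ1⟩ := hγ
  have hdσ := abs_deriv_le_of_lipschitz hσlip
  have hVnet : ∀ θ s, V θ s = TwoLayerNet.net σ b (emb s) θ := hV
  have hgrad : ∀ θ s, gradV θ s = TwoLayerNet.netGrad σ b (emb s) θ := fun θ s => by
    ext ⟨r, j⟩
    rw [hgradV]
    simp only [TwoLayerNet.netGrad, TwoLayerNet.outer, TwoLayerNet.preact]
    ring
  have hfderiv : ∀ x s, fderiv ℝ V θstar x s = ⟪gradV θstar s, x⟫ :=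
    fderiv_euclidean_apply (f' := fun s => innerSL ℝ (gradV θstar s)) fun s => by
      simpa only [hVnet, hgrad] using TwoLayerNet.hasFDerivAt_net hσdiff b (emb s) θstar
  set σstar := ⨅ x : {x : EuclideanSpace ℝ (Fin m × Fin d) // x ≠ 0},
    √(∑ s, μ s * (fderiv ℝ V θstar x.1 s) ^ 2) / ‖x.1‖
  have hσJ : ∀ x, σstar * ‖x‖ ≤ weightedNorm μ fun s => ⟪gradV θstar s, x⟫ := fun x =>
    (iInf_div_norm_mul_norm_le (f := fun x => √(∑ s, μ s * (fderiv ℝ V θstar x s) ^ 2))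
      (fun x => Real.sqrt_nonneg _) x).trans_eq (by simp only [weightedNorm, hfderiv])
  refine (td_expected_sq_dist_le (V := fun θ s => V θ s) (L := l) (κ := c0 / √m / 2)
    hPnonneg hProw hμnonneg hμsum hstat hγ0.le hγ1 hα.le
    (Real.iInf_nonneg fun x => div_nonneg (Real.sqrt_nonneg _) (norm_nonneg _)) hrew
    (fun θ s => hgrad θ s ▸ TwoLayerNet.norm_netGrad_le hdσ hb (hemb s) θ)
    (fun θ θ' s => by
      simpa only [hVnet] using TwoLayerNet.abs_net_sub_le hσdiff hdσ hb (hemb s) θ θ')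
    (fun θ θ' s => by
      simpa only [hVnet, hgrad] using
        TwoLayerNet.abs_net_sub_sub_inner_le hσdiff hσsmooth hb (hemb s) θ θ')
    hbellman hσJ θ).trans_eq ?_
  ring

/-- One-step expected-progress bound for (unprojected) neural TD with a one-hidden-layer
network: if `θ*` solves the Bellman equation, the TD update
`θ⁺(s,s') = θ + α ∇_θ V(s,θ)(r(s) + γ V(s',θ) − V(s,θ))` satisfies
`Σ_s μ(s) Σ_{s'} P(s,s') ‖θ⁺(s,s') − θ*‖²
  ≤ (1 − 2α(1−γ)σ*² + 3α²(1+γ²)l⁴)‖θ−θ*‖²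
    + 4α(1+γ)c0 l m^{−1/2}‖θ−θ*‖³ + 12α²γ²l²r_max²/(1−γ)²`. -/
theorem stmt19 {S : Type*} [Fintype S] {d m : ℕ} (hm : 1 ≤ m)
    (P : S → S → ℝ) (μ : S → ℝ) (γ l c0 α rmax : ℝ)
    (hPnonneg : ∀ s s', 0 ≤ P s s') (hProw : ∀ s, ∑ s', P s s' = 1)
    (hμnonneg : ∀ s, 0 ≤ μ s) (hμsum : ∑ s, μ s = 1)
    (hstat : ∀ s', ∑ s, μ s * P s s' = μ s')
    (hγ : γ ∈ Set.Ioo (0 : ℝ) 1) (hα : 0 < α) (hrmax : 0 ≤ rmax)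
    (σ : ℝ → ℝ) (hσdiff : Differentiable ℝ σ)
    (hσlip : ∀ u v, |σ u - σ v| ≤ l * |u - v|)
    (hσsmooth : ∀ u v, |deriv σ u - deriv σ v| ≤ c0 * |u - v|)
    (b : Fin m → ℝ) (hb : ∀ r, |b r| ≤ 1)
    (emb : S → EuclideanSpace ℝ (Fin d)) (hemb : ∀ s, ‖emb s‖ ≤ 1)
    (rew : S → ℝ) (hrew : ∀ s, |rew s| ≤ rmax)
    (V : EuclideanSpace ℝ (Fin m × Fin d) → EuclideanSpace ℝ S)
    (hV : ∀ θ s, V θ s = (1 / Real.sqrt m) * ∑ r, b r * σ (∑ j, θ (r, j) * emb s j))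
    (gradV : EuclideanSpace ℝ (Fin m × Fin d) → S → EuclideanSpace ℝ (Fin m × Fin d))
    (hgradV : ∀ θ s (r : Fin m) (j : Fin d),
      gradV θ s (r, j)
        = (1 / Real.sqrt m) * b r * deriv σ (∑ j', θ (r, j') * emb s j') * emb s j)
    (θstar : EuclideanSpace ℝ (Fin m × Fin d))
    (hbellman : ∀ s, V θstar s = rew s + γ * ∑ s'', P s s'' * V θstar s'')
    (θ : EuclideanSpace ℝ (Fin m × Fin d)) :
    ∑ s, μ s * ∑ s', P s s' *
        ‖θ + (α * (rew s + γ * V θ s' - V θ s)) • gradV θ s - θstar‖ ^ 2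
      ≤ (1 - 2 * α * (1 - γ) *
            (⨅ x : {x : EuclideanSpace ℝ (Fin m × Fin d) // x ≠ 0},
              Real.sqrt (∑ s, μ s * (fderiv ℝ V θstar x.1 s) ^ 2) / ‖x.1‖) ^ 2
          + 3 * α ^ 2 * (1 + γ ^ 2) * l ^ 4) * ‖θ - θstar‖ ^ 2
        + 4 * α * (1 + γ) * c0 * l * (Real.sqrt m)⁻¹ * ‖θ - θstar‖ ^ 3
        + 12 * α ^ 2 * γ ^ 2 * l ^ 2 * rmax ^ 2 / (1 - γ) ^ 2 :=
  stmt19_general P μ γ l c0 α rmax hPnonneg hProw hμnonneg hμsum hstat hγ hα σ hσdiff hσlip hσsmooth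
    b hb emb hemb rew hrew V hV gradV hgradV θstar hbellman θ
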